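/- Let a > 0. The function m ↦ α(a,m) is strictly decreasing on (1, ∞), where α(a,m) ∈ (Θ₀,1) is the unique value of α such that inf_{ξ∈ℝ} μ₁(a,m,α;ξ) = 0. -/

import Mathlib

open MeasureTheory Set Filter Topology

noncomputable section

/-- `B¹(ℝ₊)`-type regularity on the half line (smooth core):
`u`, `u'` and `t·u` are square integrable on `(0,∞)`. -/
def MemB1p (u : ℝ → ℝ) : Prop :=
  Differentiable ℝ u ∧
  IntegrableOn (fun t => (u t)^2) (Ioi 0) ∧
  IntegrableOn (fun t => (deriv u t)^2) (Ioi 0) ∧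
  IntegrableOn (fun t => t^2 * (u t)^2) (Ioi 0)

/-- The Robin quadratic form `q[γ,ξ]` of `-d²/dt² + (t-ξ)²` on `ℝ₊`. -/
def qRobin (γ ξ : ℝ) (u : ℝ → ℝ) : ℝ :=
  (∫ t in Ioi (0:ℝ), ((deriv u t)^2 + (t - ξ)^2 * (u t)^2)) + γ * (u 0)^2

/-- squared `L²(ℝ₊)` norm. -/
def np (u : ℝ → ℝ) : ℝ := ∫ t in Ioi (0:ℝ), (u t)^2

/-- Lowest Robin eigenvalue `λ₁(γ,ξ)`, defined variationally. -/
def lambda1 (γ ξ : ℝ) : ℝ :=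
  sInf {r : ℝ | ∃ u : ℝ → ℝ, MemB1p u ∧ np u ≠ 0 ∧ r = qRobin γ ξ u / np u}

/-- Lowest Neumann eigenvalue `λ₁^N(ξ)` (Robin with `γ = 0`). -/
def lambda1N (ξ : ℝ) : ℝ := lambda1 0 ξ

/-- Lowest Dirichlet eigenvalue `λ₁^D(ξ)`, defined variationally. -/
def lambda1D (ξ : ℝ) : ℝ :=
  sInf {r : ℝ | ∃ u : ℝ → ℝ, MemB1p u ∧ u 0 = 0 ∧ np u ≠ 0 ∧ r = qRobin 0 ξ u / np u}

/-- The de Gennes constant `Θ₀ = inf_ξ λ₁^N(ξ)`. -/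
def Theta0 : ℝ := sInf (Set.range lambda1N)

/-- `B¹(ℝ)`-type regularity on the whole line (smooth core). -/
def MemB1 (u : ℝ → ℝ) : Prop :=
  Differentiable ℝ u ∧
  Integrable (fun t => (u t)^2) ∧
  Integrable (fun t => (deriv u t)^2) ∧
  Integrable (fun t => t^2 * (u t)^2)

/-- The interface quadratic form `Q[a,m,α;ξ]` on `B¹(ℝ)`. -/
def QI (a m α ξ : ℝ) (u : ℝ → ℝ) : ℝ :=
  (∫ t in Ioi (0:ℝ), ((deriv u t)^2 + (t - ξ)^2 * (u t)^2 - α * (u t)^2)) +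
  ∫ t in Iio (0:ℝ), ((1/m) * ((deriv u t)^2 + (t - ξ)^2 * (u t)^2) + a * α * (u t)^2)

/-- squared `L²(ℝ)` norm. -/
def nR (u : ℝ → ℝ) : ℝ := ∫ t, (u t)^2

/-- Ground state energy `μ₁(a,m,α;ξ)` of the interface operator, defined variationally. -/
def mu1 (a m α ξ : ℝ) : ℝ :=
  sInf {r : ℝ | ∃ u : ℝ → ℝ, MemB1 u ∧ nR u ≠ 0 ∧ r = QI a m α ξ u / nR u}

/-!
Suppose `α₂ ≤ α₁`. For `u ∈ B¹(ℝ)` write `Qᵢ = S - αᵢ P + T / mᵢ + a αᵢ N`, where `S`, `T` are the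
harmonic-oscillator energies `∫ (u'² + (t-ξ)² u²)` of `u` on `ℝ₊`, `ℝ₋` and `P`, `N` its masses
there. Criticality of `(m₁, α₁)` gives `Q₁ ≥ 0`, and the ground state energy `1` of the harmonic
oscillator on the line gives `P + N ≤ S + T`. As `1/m₂ > 1/m₁`, `α₂ < 1` and `a > 0`, these force
`Q₂ ≥ c (N + P)` with `c > 0` independent of `ξ` and `u`, so `inf_ξ μ₁(a,m₂,α₂;ξ) ≥ c > 0`,
contradicting the criticality of `(m₂, α₂)`.
-/

lemma integrable_mul_of_integrable_sq {X : Type*} [MeasurableSpace X] {μ : Measure X}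
    {f g : X → ℝ} (hf : AEStronglyMeasurable f μ) (hg : AEStronglyMeasurable g μ)
    (hf2 : Integrable (fun x => f x ^ 2) μ) (hg2 : Integrable (fun x => g x ^ 2) μ) :
    Integrable (fun x => f x * g x) μ :=
  ((memLp_two_iff_integrable_sq hf).2 hf2).integrable_mul ((memLp_two_iff_integrable_sq hg).2 hg2)

lemma integral_eq_setIntegral_Iio_add_Ioi {f : ℝ → ℝ} (hf : Integrable f) :
    ∫ t, f t = (∫ t in Iio (0:ℝ), f t) + ∫ t in Ioi (0:ℝ), f t := by
  rw [← intervalIntegral.integral_Iic_add_Ioi hf.integrableOn hf.integrableOn,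
    integral_Iic_eq_integral_Iio]

lemma memB1_of_hasCompactSupport {u : ℝ → ℝ} (hu : ContDiff ℝ 1 u) (hc : HasCompactSupport u) :
    MemB1 u := by
  have hsq : HasCompactSupport fun t => u t ^ 2 := hc.comp_left (g := fun x => x ^ 2) (by simp)
  refine ⟨hu.differentiable one_ne_zero, (hu.continuous.pow 2).integrable_of_hasCompactSupport hsq,
    ?_, ?_⟩
  · have hd : HasCompactSupport fun t => deriv u t ^ 2 :=
      hc.deriv.comp_left (g := fun x => x ^ 2) (by simp)
    exact ((hu.continuous_deriv le_rfl).pow 2).integrable_of_hasCompactSupport hd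
  · exact ((continuous_id.pow 2).mul (hu.continuous.pow 2)).integrable_of_hasCompactSupport
      hsq.mul_left

lemma exists_memB1_nR_ne_zero : ∃ u, MemB1 u ∧ nR u ≠ 0 := by
  obtain ⟨φ⟩ : Nonempty (ContDiffBump (0 : ℝ)) := inferInstance
  refine ⟨φ, memB1_of_hasCompactSupport φ.contDiff φ.hasCompactSupport, ?_⟩
  have hsq : HasCompactSupport fun t => φ t ^ 2 :=
    φ.hasCompactSupport.comp_left (g := fun x => x ^ 2) (by simp)
  refine ((φ.continuous.pow 2).integral_pos_of_hasCompactSupport_nonneg_nonzero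
    (x := 0) hsq (fun t => sq_nonneg _) ?_).ne'
  simp [φ.one_of_mem_closedBall (Metric.mem_closedBall_self φ.rIn_pos.le)]

namespace MemB1

variable {u : ℝ → ℝ}

lemma integrable_shift_sq_mul_sq (hu : MemB1 u) (ξ : ℝ) :
    Integrable (fun t => (t - ξ) ^ 2 * u t ^ 2) := by
  have hmeas : AEStronglyMeasurable u := hu.1.continuous.aestronglyMeasurable
  have htu : Integrable (fun t => t * u t * u t) :=
    integrable_mul_of_integrable_sq (continuous_id.mul hu.1.continuous).aestronglyMeasurable
      hmeas (by simpa only [mul_pow] using hu.2.2.2) hu.2.1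
  refine ((hu.2.2.2.sub (htu.const_mul (2 * ξ))).add (hu.2.1.const_mul (ξ ^ 2))).congr
    (ae_of_all _ fun t => ?_)
  simp only [Pi.add_apply, Pi.sub_apply]
  ring

lemma integrable_shift_mul (hu : MemB1 u) (ξ : ℝ) {g : ℝ → ℝ}
    (hg : AEStronglyMeasurable g) (hg2 : Integrable fun t => g t ^ 2) :
    Integrable (fun t => (t - ξ) * u t * g t) :=
  integrable_mul_of_integrable_sq
    ((continuous_id.sub continuous_const).mul hu.1.continuous).aestronglyMeasurable hg
    (by simpa only [mul_pow] using hu.integrable_shift_sq_mul_sq ξ) hg2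

lemma integrable_energy (hu : MemB1 u) (ξ : ℝ) :
    Integrable (fun t => deriv u t ^ 2 + (t - ξ) ^ 2 * u t ^ 2) :=
  hu.2.2.1.add (hu.integrable_shift_sq_mul_sq ξ)

/-- The harmonic oscillator `-d²/dt² + (t-ξ)²` on the line is bounded below by its ground state
energy `1`: expand `∫ (u' + (t-ξ)u)² ≥ 0` and integrate `2(t-ξ)uu' = ((t-ξ)u²)' - u²` by parts. -/
lemma nR_le_integral_energy (hu : MemB1 u) (ξ : ℝ) :
    nR u ≤ ∫ t, (deriv u t ^ 2 + (t - ξ) ^ 2 * u t ^ 2) := by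
  have hmeas : AEStronglyMeasurable u := hu.1.continuous.aestronglyMeasurable
  have hcross := hu.integrable_shift_mul ξ (measurable_deriv u).aestronglyMeasurable hu.2.2.1
  have hparts : ∫ t, (u t ^ 2 + 2 * ((t - ξ) * u t * deriv u t)) = 0 := by
    refine integral_eq_zero_of_hasDerivAt_of_integrable (f := fun t => (t - ξ) * u t ^ 2)
      (fun t => ?_) (hu.2.1.add (hcross.const_mul 2))
      (by simpa only [mul_assoc, ← sq] using hu.integrable_shift_mul ξ hmeas hu.2.1)
    refine (((hasDerivAt_id t).sub_const ξ).fun_mul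
      ((hu.1 t).hasDerivAt.fun_pow 2)).congr_deriv ?_
    simp only [id]
    ring
  have hsq : 0 ≤ ∫ t, (deriv u t + (t - ξ) * u t) ^ 2 := integral_nonneg fun t => sq_nonneg _
  have hexpand : ∫ t, (deriv u t + (t - ξ) * u t) ^ 2
      = (∫ t, (deriv u t ^ 2 + (t - ξ) ^ 2 * u t ^ 2)) - nR u +
        ∫ t, (u t ^ 2 + 2 * ((t - ξ) * u t * deriv u t)) := by
    have hpoint : (fun t => (deriv u t + (t - ξ) * u t) ^ 2) = fun t =>
        (deriv u t ^ 2 + (t - ξ) ^ 2 * u t ^ 2 - u t ^ 2) +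
          (u t ^ 2 + 2 * ((t - ξ) * u t * deriv u t)) := by
      ext t; ring
    rw [hpoint, integral_add, integral_sub (hu.integrable_energy ξ) hu.2.1, nR]
    · exact (hu.integrable_energy ξ).sub hu.2.1
    · exact hu.2.1.add (hcross.const_mul 2)
  linarith

lemma setIntegral_Ioi_sq_le_energy (hu : MemB1 u) (ξ : ℝ) :
    ∫ t in Ioi (0:ℝ), u t ^ 2 ≤
      (∫ t in Ioi (0:ℝ), (deriv u t ^ 2 + (t - ξ) ^ 2 * u t ^ 2)) +
        ∫ t in Iio (0:ℝ), (deriv u t ^ 2 + (t - ξ) ^ 2 * u t ^ 2) := by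
  have hN : 0 ≤ ∫ t in Iio (0:ℝ), u t ^ 2 :=
    setIntegral_nonneg measurableSet_Iio fun _ _ => sq_nonneg _
  have h := hu.nR_le_integral_energy ξ
  rw [nR, integral_eq_setIntegral_Iio_add_Ioi hu.2.1,
    integral_eq_setIntegral_Iio_add_Ioi (hu.integrable_energy ξ)] at h
  linarith

lemma QI_eq (hu : MemB1 u) (a m α ξ : ℝ) :
    QI a m α ξ u =
      (∫ t in Ioi (0:ℝ), (deriv u t ^ 2 + (t - ξ) ^ 2 * u t ^ 2))
      - α * (∫ t in Ioi (0:ℝ), u t ^ 2)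
      + 1 / m * (∫ t in Iio (0:ℝ), (deriv u t ^ 2 + (t - ξ) ^ 2 * u t ^ 2))
      + a * α * (∫ t in Iio (0:ℝ), u t ^ 2) := by
  have he := (hu.integrable_energy ξ).integrableOn (s := Ioi 0)
  have he' := ((hu.integrable_energy ξ).const_mul (1 / m)).integrableOn (s := Iio 0)
  rw [QI, integral_sub he (hu.2.1.const_mul α).integrableOn,
    integral_add he' (hu.2.1.const_mul (a * α)).integrableOn,
    integral_const_mul, integral_const_mul, integral_const_mul]
  ring

end MemB1

lemma nR_nonneg (u : ℝ → ℝ) : 0 ≤ nR u := integral_nonneg fun _ => sq_nonneg _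

section Variational

variable {a m α : ℝ}

lemma neg_mul_nR_le_QI (ha : 0 ≤ a) (hm : 0 ≤ m) (hα : 0 ≤ α) (ξ : ℝ) {u : ℝ → ℝ}
    (hu : MemB1 u) : -α * nR u ≤ QI a m α ξ u := by
  have hS : 0 ≤ ∫ t in Ioi (0:ℝ), (deriv u t ^ 2 + (t - ξ) ^ 2 * u t ^ 2) :=
    setIntegral_nonneg measurableSet_Ioi fun _ _ => by positivity
  have hT : 0 ≤ ∫ t in Iio (0:ℝ), (deriv u t ^ 2 + (t - ξ) ^ 2 * u t ^ 2) :=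
    setIntegral_nonneg measurableSet_Iio fun _ _ => by positivity
  have hN : 0 ≤ ∫ t in Iio (0:ℝ), u t ^ 2 :=
    setIntegral_nonneg measurableSet_Iio fun _ _ => sq_nonneg _
  rw [hu.QI_eq, nR, integral_eq_setIntegral_Iio_add_Ioi hu.2.1]
  have : 0 ≤ 1 / m := by positivity
  nlinarith [mul_nonneg ha hα]

lemma neg_mem_lowerBounds_QI_div_nR (ha : 0 ≤ a) (hm : 0 ≤ m) (hα : 0 ≤ α) (ξ : ℝ) :
    -α ∈ lowerBounds {r : ℝ | ∃ u : ℝ → ℝ, MemB1 u ∧ nR u ≠ 0 ∧ r = QI a m α ξ u / nR u} := by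
  rintro r ⟨u, hu, hn, rfl⟩
  rw [le_div_iff₀ ((nR_nonneg u).lt_of_ne' hn)]
  exact neg_mul_nR_le_QI ha hm hα ξ hu

lemma neg_le_mu1 (ha : 0 ≤ a) (hm : 0 ≤ m) (hα : 0 ≤ α) (ξ : ℝ) : -α ≤ mu1 a m α ξ :=
  Real.le_sInf (neg_mem_lowerBounds_QI_div_nR ha hm hα ξ) (neg_nonpos.2 hα)

lemma QI_nonneg_of_sInf_range_mu1_nonneg (ha : 0 ≤ a) (hm : 0 ≤ m) (hα : 0 ≤ α)
    (h : 0 ≤ sInf (range (mu1 a m α))) (ξ : ℝ) {u : ℝ → ℝ} (hu : MemB1 u) (hn : nR u ≠ 0) :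
    0 ≤ QI a m α ξ u := by
  have hmu : 0 ≤ mu1 a m α ξ :=
    h.trans (csInf_le ⟨-α, by rintro _ ⟨ξ, rfl⟩; exact neg_le_mu1 ha hm hα ξ⟩ (mem_range_self ξ))
  have hQ : mu1 a m α ξ ≤ QI a m α ξ u / nR u :=
    csInf_le ⟨-α, neg_mem_lowerBounds_QI_div_nR ha hm hα ξ⟩ ⟨u, hu, hn, rfl⟩
  simpa using (le_div_iff₀ ((nR_nonneg u).lt_of_ne' hn)).1 (hmu.trans hQ)

lemma le_sInf_range_mu1 {c : ℝ}
    (hc : ∀ ξ u, MemB1 u → nR u ≠ 0 → c * nR u ≤ QI a m α ξ u) :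
    c ≤ sInf (range (mu1 a m α)) := by
  refine le_csInf (range_nonempty _) ?_
  rintro _ ⟨ξ, rfl⟩
  obtain ⟨u, hu, hn⟩ := exists_memB1_nR_ne_zero
  refine le_csInf ⟨_, u, hu, hn, rfl⟩ ?_
  rintro _ ⟨v, hv, hvn, rfl⟩
  rw [le_div_iff₀ ((nR_nonneg v).lt_of_ne' hvn)]
  exact hc ξ v hv hvn

end Variational

/-- With `δ = 1/m₂ - 1/m₁` and `κ = 1 - 1/m₂`, the certificate is
`D Q₂ - α₂δ((1-α₂)P + aα₂N) = α₂δ(S + T - P) + α₂κ Q₁ + κ(α₁-α₂)(S + T/m₂)`,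
where `D = α₂δ + κα₁` and `Qᵢ = S - αᵢP + T/mᵢ + aαᵢN`. -/
lemma exists_energy_coercivity {a m₁ m₂ α₁ α₂ : ℝ} (ha : 0 < a) (hm₂ : 1 ≤ m₂) (hm : m₂ < m₁)
    (hα₂ : α₂ ∈ Ioo 0 1) (hα : α₂ ≤ α₁) :
    ∃ c > 0, ∀ S T P N : ℝ, 0 ≤ S → 0 ≤ T → 0 ≤ P → 0 ≤ N → P ≤ S + T →
      0 ≤ S - α₁ * P + 1 / m₁ * T + a * α₁ * N →
      c * (N + P) ≤ S - α₂ * P + 1 / m₂ * T + a * α₂ * N := by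
  obtain ⟨hα₂0, hα₂1⟩ := hα₂
  set δ := 1 / m₂ - 1 / m₁
  set κ := 1 - 1 / m₂
  have hδ : 0 < δ := sub_pos.2 (one_div_lt_one_div_of_lt (by linarith) hm)
  have hκ : 0 ≤ κ := sub_nonneg.2 ((div_le_one (by linarith)).2 hm₂)
  have hD : 0 < α₂ * δ + κ * α₁ := by nlinarith
  refine ⟨α₂ * δ * min (1 - α₂) (a * α₂) / (α₂ * δ + κ * α₁), ?_,
    fun S T P N hS hT hP hN hkey h₁ => ?_⟩
  · have : 0 < min (1 - α₂) (a * α₂) := lt_min (by linarith) (by positivity)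
    positivity
  have hcert : α₂ * δ * ((1 - α₂) * P + a * α₂ * N) ≤
      (α₂ * δ + κ * α₁) * (S - α₂ * P + 1 / m₂ * T + a * α₂ * N) := by
    have hT' : 0 ≤ 1 / m₂ * T := mul_nonneg (by positivity) hT
    nlinarith [mul_nonneg (mul_nonneg hα₂0.le hδ.le) (sub_nonneg.2 hkey),
      mul_nonneg (mul_nonneg hα₂0.le hκ) h₁,
      mul_nonneg (mul_nonneg hκ (sub_nonneg.2 hα)) (add_nonneg hS hT')]
  have hmin : min (1 - α₂) (a * α₂) * (N + P) ≤ (1 - α₂) * P + a * α₂ * N := by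
    nlinarith [min_le_left (1 - α₂) (a * α₂), min_le_right (1 - α₂) (a * α₂)]
  rw [div_mul_eq_mul_div, div_le_iff₀' hD, mul_assoc]
  exact (mul_le_mul_of_nonneg_left hmin (by positivity)).trans hcert

lemma exists_QI_coercivity {a m₁ m₂ α₁ α₂ : ℝ} (ha : 0 < a) (hm₂ : 1 ≤ m₂) (hm : m₂ < m₁)
    (hα₂ : α₂ ∈ Ioo 0 1) (hα : α₂ ≤ α₁) :
    ∃ c > 0, ∀ ξ u, MemB1 u → 0 ≤ QI a m₁ α₁ ξ u → c * nR u ≤ QI a m₂ α₂ ξ u := by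
  obtain ⟨c, hc, hcoer⟩ := exists_energy_coercivity ha hm₂ hm hα₂ hα
  refine ⟨c, hc, fun ξ u hu h₁ => ?_⟩
  rw [hu.QI_eq] at h₁ ⊢
  rw [nR, integral_eq_setIntegral_Iio_add_Ioi hu.2.1]
  exact hcoer _ _ _ _ (setIntegral_nonneg measurableSet_Ioi fun _ _ => by positivity)
    (setIntegral_nonneg measurableSet_Iio fun _ _ => by positivity)
    (setIntegral_nonneg measurableSet_Ioi fun _ _ => by positivity)
    (setIntegral_nonneg measurableSet_Iio fun _ _ => by positivity)
    (hu.setIntegral_Ioi_sq_le_energy ξ) h₁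

lemma Theta0_nonneg : 0 ≤ Theta0 := by
  refine Real.sInf_nonneg ?_
  rintro _ ⟨ξ, rfl⟩
  refine Real.sInf_nonneg ?_
  rintro _ ⟨u, -, -, rfl⟩
  refine div_nonneg ?_ (setIntegral_nonneg measurableSet_Ioi fun _ _ => sq_nonneg _)
  simpa only [qRobin, zero_mul, add_zero] using
    setIntegral_nonneg measurableSet_Ioi fun _ _ => by positivity

/-- `m ↦ α(a,m)` is strictly decreasing on `(1,∞)`: if `1 < m₂ < m₁`
and `α₁, α₂ ∈ (Θ₀,1)` are the corresponding critical values (i.e.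
`inf_ξ μ₁(a,mᵢ,αᵢ;ξ) = 0`), then `α₁ < α₂`. -/
theorem alpha_strictAnti (a m₁ m₂ α₁ α₂ : ℝ) (ha : 0 < a)
    (hm₂ : 1 < m₂) (hm : m₂ < m₁)
    (hα₁ : α₁ ∈ Ioo Theta0 1) (hα₂ : α₂ ∈ Ioo Theta0 1)
    (h₁ : sInf (Set.range (mu1 a m₁ α₁)) = 0)
    (h₂ : sInf (Set.range (mu1 a m₂ α₂)) = 0) :
    α₁ < α₂ := by
  by_contra! hle
  have hα₁0 : 0 < α₁ := Theta0_nonneg.trans_lt hα₁.1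
  have hα₂0 : 0 < α₂ := Theta0_nonneg.trans_lt hα₂.1
  obtain ⟨c, hc, hcoer⟩ := exists_QI_coercivity ha hm₂.le hm ⟨hα₂0, hα₂.2⟩ hle
  have hc_le : c ≤ sInf (range (mu1 a m₂ α₂)) := le_sInf_range_mu1 fun ξ u hu hn =>
    hcoer ξ u hu (QI_nonneg_of_sInf_range_mu1_nonneg ha.le (by linarith) hα₁0.le h₁.ge ξ hu hn)
  linarith
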